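/- Let n ≥ 1, d ≥ 1, and for each α ∈ {1,…,d} let (a^α, b^α) ∈ ℂⁿ × ℂⁿ, set G_j^α := 1 + Σ_{k=j}^n a_k^α b_k^α (1 ≤ j ≤ n+1), and choose nonzero s_j^α ∈ ℂ with (s_j^α)² = G_j^α and s_{n+1}^α = 1. Let g₊,α and k_α be the associated upper- and lower-triangular matrices ((g₊,α)_{jj} = s_j^α/s_{j+1}^α, (g₊,α)_{jk} = a_j^α b_k^α/(s_k^α s_{k+1}^α) for j < k; (k_α)_{jj} = s_j^α/s_{j+1}^α, (k_α)_{jk} = a_j^α b_k^α/(s_j^α s_{j+1}^α) for j > k; zero otherwise). Define the column vectors A^α := g₊,1 ⋯ g₊,α−1 a^α and the row vectors B^α := (b^α)ᵀ k_{α−1} ⋯ k_1 (empty products equal 1ₙ). Then for every α ∈ {1,…,d}: 1ₙ + Σ_{μ=1}^α A^μ B^μ = (g₊,1 ⋯ g₊,α)(k_α ⋯ k_1), where A^μ B^μ is the n×n product of the column A^μ with the row B^μ. In particular, for α = d, if A is the n×d matrix with columns A^α and B is the d×n matrix with rows B^α, then 1ₙ + A B = (g₊,1 ⋯ g₊,d)(k_d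 ⋯ k_1). -/

import Mathlib

/-!
Each pair of factors multiplies to a rank-one perturbation of the identity,
`g₊,α k_α = 1 + a^α (b^α)ᵀ`. Write `g₊ = D + U` and `k = D + L` with `D = diag (s_j / s_{j+1})`.
Then `(U L)_{jk} = a_j b_k Σ_{l > max j k} a_l b_l / (s_l s_{l+1})²`. Since
`a_l b_l = s_l² - s_{l+1}²`, this sum telescopes to `1 - 1 / s_{m+1}²` with `m = max j k`, and the
remaining terms `D² + D L + U D` complete it to `δ_{jk} + a_j b_k`.

So inserting the pair `g₊,α k_α` in the middle of `(g₊,1 ⋯ g₊,α-1)(k_α-1 ⋯ k_1)` adds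
`(g₊,1 ⋯ g₊,α-1) a^α (b^α)ᵀ (k_α-1 ⋯ k_1) = A^α B^α`, and the identity follows by induction on `α`.
-/

open Matrix BigOperators

noncomputable section

attribute [local instance] Matrix.normedAddCommGroup Matrix.normedSpace

def csgn (m : ℤ) : ℂ := (m.sign : ℂ)

def cdelta {K : Type*} [DecidableEq K] (i j : K) : ℂ := if i = j then 1 else 0

theorem Fin.sum_ite_castSucc_le {M : Type*} [AddCommMonoid M] {n : ℕ} (f : Fin n → M)
    (i : Fin n) :
    ∑ l : Fin n, (if i.castSucc ≤ l.castSucc then f l else 0)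
      = f i + ∑ l : Fin n, if i.succ ≤ l.castSucc then f l else 0 := by
  have hsplit : ∀ l : Fin n, (if i.castSucc ≤ l.castSucc then f l else 0) =
      (if l = i then f i else 0) + if i.succ ≤ l.castSucc then f l else 0 := by
    intro l
    rcases lt_trichotomy l i with h | rfl | h
    · simp [h.ne, not_le.mpr h, Fin.succ_le_castSucc_iff, not_lt.mpr h.le]
    · simp [Fin.succ_le_castSucc_iff]
    · simp [h.ne', h.le, Fin.succ_le_castSucc_iff, h]
  rw [Finset.sum_congr rfl fun l _ => hsplit l, Finset.sum_add_distrib,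
    Finset.sum_ite_eq' Finset.univ i, if_pos (Finset.mem_univ _)]

theorem Fin.sum_ite_le_castSucc_sub {M : Type*} [AddCommGroup M] {n : ℕ}
    (f : Fin (n + 1) → M) (p : Fin (n + 1)) :
    ∑ l : Fin n, (if p ≤ l.castSucc then f l.succ - f l.castSucc else 0)
      = f (Fin.last n) - f p := by
  induction p using Fin.reverseInduction with
  | last => simp
  | cast i ih =>
    rw [Fin.sum_ite_castSucc_le, ih]
    abel

theorem Fin.sum_ite_val_lt_succ {M : Type*} [AddCommMonoid M] {d m : ℕ} (hm : m < d)
    (f : Fin d → M) :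
    ∑ μ : Fin d, (if (μ : ℕ) < m + 1 then f μ else 0)
      = (∑ μ : Fin d, if (μ : ℕ) < m then f μ else 0) + f ⟨m, hm⟩ := by
  have hsplit : ∀ μ : Fin d, (if (μ : ℕ) < m + 1 then f μ else 0)
      = (if (μ : ℕ) < m then f μ else 0) + if μ = ⟨m, hm⟩ then f ⟨m, hm⟩ else 0 := by
    intro μ
    rcases lt_trichotomy (μ : ℕ) m with h | h | h
    · simp [h, Nat.lt_succ_of_lt h, Fin.ext_iff, h.ne]
    · obtain rfl : μ = ⟨m, hm⟩ := Fin.ext h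
      simp
    · simp [Nat.not_lt.mpr h.le, Nat.not_lt.mpr (Nat.succ_le_of_lt h), Fin.ext_iff, h.ne']
  rw [Finset.sum_congr rfl fun μ _ => hsplit μ, Finset.sum_add_distrib,
    Finset.sum_ite_eq' Finset.univ, if_pos (Finset.mem_univ _)]

theorem prod_take_finRange_mul_prod_reverse {R : Type*} [Ring R] {d : ℕ} (g k : Fin d → R)
    {m : ℕ} (hm : m ≤ d) :
    (((List.finRange d).take m).map g).prod * (((List.finRange d).take m).map k).reverse.prod
      = 1 + ∑ μ : Fin d, if (μ : ℕ) < m then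
          (((List.finRange d).take μ).map g).prod * (g μ * k μ - 1) *
            (((List.finRange d).take μ).map k).reverse.prod else 0 := by
  induction m with
  | zero => simp
  | succ m ih =>
    have hm' : m < d := hm
    have htake : (List.finRange d).take (m + 1) = (List.finRange d).take m ++ [⟨m, hm'⟩] := by
      simp [List.take_add_one, hm']
    rw [Fin.sum_ite_val_lt_succ hm', ← add_assoc, ← ih hm'.le, htake]
    simp only [List.map_append, List.prod_append, List.reverse_append, List.map_cons,
      List.map_nil, List.reverse_cons, List.reverse_nil, List.nil_append, List.prod_cons,
      List.prod_nil, mul_one]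
    noncomm_ring

section Factorization

variable {K : Type*} [Field K] {n : ℕ} (a b : Fin n → K) (s : Fin (n + 1) → K)

def upperFactor : Matrix (Fin n) (Fin n) K :=
  of fun j k => if j = k then s j.castSucc / s j.succ
    else if j < k then a j * b k / (s k.castSucc * s k.succ) else 0

def lowerFactor : Matrix (Fin n) (Fin n) K :=
  of fun j k => if j = k then s j.castSucc / s j.succ
    else if k < j then a j * b k / (s j.castSucc * s j.succ) else 0

variable {a b s}

theorem sum_ite_le_castSucc_div_sq (hs : ∀ j, s j ≠ 0)
    (hstep : ∀ l, s l.castSucc ^ 2 = s l.succ ^ 2 + a l * b l) (hlast : s (Fin.last n) ^ 2 = 1)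
    (p : Fin (n + 1)) :
    ∑ l, (if p ≤ l.castSucc then a l * b l / (s l.castSucc * s l.succ) ^ 2 else 0)
      = 1 - (s p ^ 2)⁻¹ := by
  have hterm : ∀ l, a l * b l / (s l.castSucc * s l.succ) ^ 2
      = (s l.succ ^ 2)⁻¹ - (s l.castSucc ^ 2)⁻¹ := by
    intro l
    rw [eq_sub_of_add_eq' (hstep l).symm]
    have := hs l.castSucc
    have := hs l.succ
    field_simp
  simp_rw [hterm]
  rw [Fin.sum_ite_le_castSucc_sub (fun j => (s j ^ 2)⁻¹), hlast, inv_one]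

theorem upperFactor_mul_lowerFactor (hs : ∀ j, s j ≠ 0)
    (hstep : ∀ l, s l.castSucc ^ 2 = s l.succ ^ 2 + a l * b l) (hlast : s (Fin.last n) ^ 2 = 1) :
    upperFactor a b s * lowerFactor a b s = 1 + vecMulVec a b := by
  set d : Fin n → K := fun j => s j.castSucc / s j.succ
  set c : Fin n → K := fun l => (s l.castSucc * s l.succ)⁻¹
  set U : Matrix (Fin n) (Fin n) K := of fun j l => if j < l then a j * b l * c l else 0
  set L : Matrix (Fin n) (Fin n) K := of fun l k => if k < l then a l * b k * c l else 0
  have hU : upperFactor a b s = diagonal d + U := by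
    ext j l
    rcases lt_trichotomy j l with h | rfl | h
    · simp [upperFactor, U, c, h, h.ne, div_eq_mul_inv]
    · simp [upperFactor, U, d]
    · simp [upperFactor, U, h.ne', not_lt.mpr h.le]
  have hL : lowerFactor a b s = diagonal d + L := by
    ext l k
    rcases lt_trichotomy k l with h | rfl | h
    · simp [lowerFactor, L, c, h, h.ne', div_eq_mul_inv]
    · simp [lowerFactor, L, d]
    · simp [lowerFactor, L, h.ne, not_lt.mpr h.le]
  have hUL : ∀ j k, (U * L) j k = a j * b k * (1 - (s (max j k).succ ^ 2)⁻¹) := by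
    intro j k
    rw [← sum_ite_le_castSucc_div_sq hs hstep hlast, Finset.mul_sum, mul_apply]
    refine Finset.sum_congr rfl fun l _ => ?_
    simp only [U, L, c, of_apply, Fin.succ_le_castSucc_iff, max_lt_iff, ite_mul, mul_ite,
      zero_mul, mul_zero, ← ite_and, and_comm]
    split_ifs
    · field_simp
    · rfl
  ext j k
  rw [hU, hL, mul_add, add_mul, add_mul, diagonal_mul_diagonal]
  simp only [Matrix.add_apply, diagonal_mul, mul_diagonal, hUL, diagonal_apply, Matrix.one_apply,
    vecMulVec_apply]
  simp only [U, L, d, c, of_apply]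
  have := hs j.castSucc
  have := hs j.succ
  rcases lt_trichotomy j k with h | rfl | h
  · have := hs k.castSucc
    have := hs k.succ
    simp only [h, h.ne, not_lt.mpr h.le, max_eq_right h.le, if_true, if_false]
    field_simp
    ring
  · simp only [lt_irrefl, max_self, if_true, if_false]
    rw [div_mul_div_comm, ← sq, ← sq, hstep]
    field_simp
    ring
  · simp only [h, h.ne', not_lt.mpr h.le, max_eq_left h.le, if_true, if_false]
    field_simp
    ring

theorem upperFactor_mul_lowerFactor_of_sq_eq (hs : ∀ j, s j ≠ 0)
    (hsq : ∀ j, s j ^ 2 = 1 + ∑ k : Fin n, if (j : ℕ) ≤ (k : ℕ) then a k * b k else 0) :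
    upperFactor a b s * lowerFactor a b s = 1 + vecMulVec a b := by
  have hsq' : ∀ j, s j ^ 2 = 1 + ∑ k : Fin n, if j ≤ k.castSucc then a k * b k else 0 := by
    simpa only [Fin.le_def, Fin.val_castSucc] using hsq
  refine upperFactor_mul_lowerFactor hs (fun l => ?_) ?_
  · rw [hsq', hsq', Fin.sum_ite_castSucc_le]
    ring
  · simp [hsq']

end Factorization

theorem statement1_general (n d : ℕ)
    (a b : Fin d → Fin n → ℂ) (s : Fin d → Fin (n + 1) → ℂ)
    (hs0 : ∀ α j, s α j ≠ 0)
    (hsq : ∀ α j, s α j ^ 2 = 1 + ∑ k : Fin n, (if (j : ℕ) ≤ (k : ℕ) then a α k * b α k else 0))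
    (gp km : Fin d → Matrix (Fin n) (Fin n) ℂ)
    (hgp : ∀ α j k, gp α j k =
      if j = k then s α j.castSucc / s α j.succ
      else if j < k then a α j * b α k / (s α k.castSucc * s α k.succ) else 0)
    (hkm : ∀ α j k, km α j k =
      if j = k then s α j.castSucc / s α j.succ
      else if k < j then a α j * b α k / (s α j.castSucc * s α j.succ) else 0)
    (A B : Fin d → Fin n → ℂ)
    (hA : ∀ α : Fin d, A α = (((List.finRange d).take (α : ℕ)).map gp).prod *ᵥ a α)
    (hB : ∀ α : Fin d, B α = b α ᵥ* ((((List.finRange d).take (α : ℕ)).map km).reverse).prod) :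
    (∀ α : Fin d,
      (1 : Matrix (Fin n) (Fin n) ℂ)
          + ∑ μ : Fin d, (if (μ : ℕ) ≤ (α : ℕ) then Matrix.vecMulVec (A μ) (B μ) else 0)
        = (((List.finRange d).take ((α : ℕ) + 1)).map gp).prod *
            ((((List.finRange d).take ((α : ℕ) + 1)).map km).reverse).prod) ∧
    (1 : Matrix (Fin n) (Fin n) ℂ)
        + (Matrix.of fun i α => A α i) * (Matrix.of fun α i => B α i)
      = ((List.finRange d).map gp).prod * (((List.finRange d).map km).reverse).prod := by
  have hfac : ∀ α, gp α * km α - 1 = vecMulVec (a α) (b α) := by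
    intro α
    have hg : gp α = upperFactor (a α) (b α) (s α) := by ext j k; exact hgp α j k
    have hk : km α = lowerFactor (a α) (b α) (s α) := by ext j k; exact hkm α j k
    rw [hg, hk, upperFactor_mul_lowerFactor_of_sq_eq (hs0 α) (hsq α), add_sub_cancel_left]
  have hterm : ∀ μ : Fin d, (((List.finRange d).take μ).map gp).prod * (gp μ * km μ - 1) *
      (((List.finRange d).take μ).map km).reverse.prod = vecMulVec (A μ) (B μ) := by
    intro μ
    rw [hfac, hA, hB, mul_vecMulVec, vecMulVec_mul]
  refine ⟨fun α => ?_, ?_⟩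
  · simp_rw [prod_take_finRange_mul_prod_reverse gp km α.isLt, Nat.lt_succ_iff, hterm]
  · have hAB : (of fun i α => A α i) * (of fun α i => B α i) = ∑ μ, vecMulVec (A μ) (B μ) := by
      ext i j
      simp [mul_apply, Matrix.sum_apply, vecMulVec_apply]
    have hall := prod_take_finRange_mul_prod_reverse gp km le_rfl
    simp_rw [List.take_of_length_le (List.length_finRange (n := d)).le, Fin.is_lt, if_true,
      hterm] at hall
    rw [hAB, hall]

/-- for each `α`, `1ₙ + Σ_{μ=1}^α A^μ B^μ = (g₊,1⋯g₊,α)(k_α⋯k_1)`; in particular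
`1ₙ + A B = (g₊,1⋯g₊,d)(k_d⋯k_1)`. -/
theorem statement1 (n d : ℕ) (hn : 1 ≤ n) (hd : 1 ≤ d)
    (a b : Fin d → Fin n → ℂ) (s : Fin d → Fin (n + 1) → ℂ)
    (hs0 : ∀ α j, s α j ≠ 0)
    (hsq : ∀ α j, s α j ^ 2 = 1 + ∑ k : Fin n, (if (j : ℕ) ≤ (k : ℕ) then a α k * b α k else 0))
    (hlast : ∀ α, s α (Fin.last n) = 1)
    (gp km : Fin d → Matrix (Fin n) (Fin n) ℂ)
    (hgp : ∀ α j k, gp α j k =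
      if j = k then s α j.castSucc / s α j.succ
      else if j < k then a α j * b α k / (s α k.castSucc * s α k.succ) else 0)
    (hkm : ∀ α j k, km α j k =
      if j = k then s α j.castSucc / s α j.succ
      else if k < j then a α j * b α k / (s α j.castSucc * s α j.succ) else 0)
    (A B : Fin d → Fin n → ℂ)
    (hA : ∀ α : Fin d, A α = (((List.finRange d).take (α : ℕ)).map gp).prod *ᵥ a α)
    (hB : ∀ α : Fin d, B α = b α ᵥ* ((((List.finRange d).take (α : ℕ)).map km).reverse).prod) :
    (∀ α : Fin d,
      (1 : Matrix (Fin n) (Fin n) ℂ)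
          + ∑ μ : Fin d, (if (μ : ℕ) ≤ (α : ℕ) then Matrix.vecMulVec (A μ) (B μ) else 0)
        = (((List.finRange d).take ((α : ℕ) + 1)).map gp).prod *
            ((((List.finRange d).take ((α : ℕ) + 1)).map km).reverse).prod) ∧
    (1 : Matrix (Fin n) (Fin n) ℂ)
        + (Matrix.of fun i α => A α i) * (Matrix.of fun α i => B α i)
      = ((List.finRange d).map gp).prod * (((List.finRange d).map km).reverse).prod :=
  statement1_general n d a b s hs0 hsq gp km hgp hkm A B hA hB
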